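/- arXiv:math/9706209 — 2 statements merged into one kernel-verified Lean document; each statement's English description precedes it below -/
import Mathlib

section
/- For every infinite subset M = (m_i)_{i=1}^∞ of ℕ (listed increasingly), setting l = m_1 and F = {m_1} ∪ {m_j : j ∈ F_l} where F_l = {2^l+1, …, 2^l+l}, one has |F| = l + 1 > min F, hence F ∉ S_1, while F belongs to the family 𝔽 = ⋃_{k≥1}{ {1} ∪ E, E : E ⊆ F_k } pushed onto M; in particular 𝔽(M) ⊄ S_1. -/
/-!
The enumeration of `M` is strictly increasing, and every index in `F_l` exceeds `1`, so
`F = {m_1} ∪ m_{F_l}` has exactly `l + 1` elements while its minimum is `m_1 = l`.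
-/

open Ordinal Set

/-- 1-indexed increasing enumeration of an (infinite) subset of ℕ. -/
noncomputable def enum1 (M : Set ℕ) (i : ℕ) : ℕ := Nat.nth (· ∈ M) (i - 1)

/-- A collection of finite subsets of ℕ is hereditary if closed under subsets. -/
def Hereditary (𝓕 : Set (Finset ℕ)) : Prop :=
  ∀ ⦃E F : Finset ℕ⦄, E ⊆ F → F ∈ 𝓕 → E ∈ 𝓕

/-- A collection is spreading if closed under spreadings. -/
def Spreading (𝓕 : Set (Finset ℕ)) : Prop :=
  ∀ F ∈ 𝓕, ∀ (G : Finset ℕ) (h : G.card = F.card),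
    (∀ i : Fin F.card, ((F.orderIsoOfFin rfl i : ℕ)) ≤ ((G.orderIsoOfFin h i : ℕ))) → G ∈ 𝓕

/-- `𝓕[N]`: members of `𝓕` that are subsets of `N`. -/
def restrict (𝓕 : Set (Finset ℕ)) (N : Set ℕ) : Set (Finset ℕ) :=
  {E ∈ 𝓕 | (E : Set ℕ) ⊆ N}

/-- `𝓕(M)`: push the collection `𝓕` onto the infinite set `M` via its increasing
(1-indexed) enumeration. -/
noncomputable def push (𝓕 : Set (Finset ℕ)) (M : Set ℕ) : Set (Finset ℕ) :=
  {F | ∃ E ∈ 𝓕, F = E.image (enum1 M)}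

/-- Characteristic function of a finite set, as a point of the Cantor space. -/
def chi (F : Finset ℕ) : ℕ → Bool := fun n => decide (n ∈ F)

/-- Pointwise closedness of a family of finite subsets of ℕ, viewed in `2^ℕ`. -/
def PtwiseClosed (𝓕 : Set (Finset ℕ)) : Prop := IsClosed (chi '' 𝓕)

/-- An adequate family is hereditary and pointwise closed. -/
def Adequate (𝓕 : Set (Finset ℕ)) : Prop := Hereditary 𝓕 ∧ PtwiseClosed 𝓕

/-- The first Schreier class `S₁ = {F : |F| ≤ min F}` (with `∅ ∈ S₁`). -/
def Schreier1 : Set (Finset ℕ) := {F | ∀ n ∈ F, F.card ≤ n}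

/-- A system of Schreier classes `S α` for all ordinals, together with the fixed
cofinal sequences used at limit stages. -/
structure SchreierSystem where
  S : Ordinal → Set (Finset ℕ)
  seq : Ordinal → ℕ → Ordinal
  seq_lt : ∀ {α : Ordinal}, Order.IsSuccLimit α → ∀ n, seq α n < α
  seq_mono : ∀ {α : Ordinal}, Order.IsSuccLimit α → StrictMono (seq α)
  seq_sup : ∀ {α : Ordinal}, Order.IsSuccLimit α → (⨆ n, seq α n) = α
  zero_def : S 0 = {F | ∃ n : ℕ, 1 ≤ n ∧ F = {n}} ∪ {∅}
  one_def : S 1 = Schreier1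
  succ_def : ∀ α : Ordinal, S (α + 1) =
    {F | ∃ (k : ℕ) (Fs : Fin (k + 1) → Finset ℕ),
      F = Finset.univ.biUnion Fs ∧ (∀ i, Fs i ∈ S α) ∧
      (∀ i j : Fin (k + 1), i < j → ∀ x ∈ Fs i, ∀ y ∈ Fs j, x < y) ∧
      (∀ x ∈ Fs 0, k + 1 ≤ x)}
  limit_def : ∀ α : Ordinal, Order.IsSuccLimit α → S α =
    {F | ∃ n : ℕ, 1 ≤ n ∧ F ∈ S (seq α n) ∧ ∀ m ∈ F, n ≤ m}

/-- Transfinitely iterated strong Cantor–Bendixson derivative of `G[L]`. -/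
noncomputable def sDeriv (G : Set (Finset ℕ)) (L : Set ℕ) : Ordinal → Set (Finset ℕ) :=
  fun β => Ordinal.limitRecOn β (restrict G L)
    (fun _ D => {A ∈ D | {l ∈ L | insert l A ∉ D}.Finite})
    (fun o _ ih => ⋂ (b : Set.Iio o), ih b b.2)

/-- Strong Cantor–Bendixson index of `G[L]`. -/
noncomputable def sIndex (G : Set (Finset ℕ)) (L : Set ℕ) : Ordinal :=
  sInf {β | sDeriv G L β = ∅}

/-- The block `F_k = {2^k + 1, …, 2^k + k}`. -/
def block (k : ℕ) : Finset ℕ := Finset.Ioc (2 ^ k) (2 ^ k + k)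

/-- The family `⋃_{k ≥ 1} {E, {1} ∪ E : E ⊆ F_k}`. -/
def blockFamily : Set (Finset ℕ) :=
  {A | ∃ k : ℕ, 1 ≤ k ∧ (A ⊆ block k ∨ ∃ E ⊆ block k, A = insert 1 E)}

lemma one_lt_of_mem_block {k i : ℕ} (hi : i ∈ block k) : 1 < i := by
  have : 1 ≤ 2 ^ k := Nat.one_le_two_pow
  simp only [block, Finset.mem_Ioc] at hi
  omega

lemma block_subset_block_max_one (k : ℕ) : block k ⊆ block (max k 1) := by
  rcases Nat.eq_zero_or_pos k with rfl | hk
  · simp [block]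
  · rw [max_eq_left hk]

lemma insert_one_block_mem_blockFamily (k : ℕ) : insert 1 (block k) ∈ blockFamily :=
  ⟨max k 1, le_max_right _ _, Or.inr ⟨block k, block_subset_block_max_one k, rfl⟩⟩

section enum1

variable {M : Set ℕ}

lemma enum1_strictMonoOn (hM : M.Infinite) : StrictMonoOn (enum1 M) (Set.Ici 1) :=
  fun i hi j hj hij => Nat.nth_strictMono hM (by simp only [Set.mem_Ici] at hi hj; omega)

lemma card_insert_enum1_one_image (hM : M.Infinite) {s : Finset ℕ} (hs : ∀ i ∈ s, 1 < i) :
    (insert (enum1 M 1) (s.image (enum1 M))).card = s.card + 1 := by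
  have hnotMem : enum1 M 1 ∉ s.image (enum1 M) := by
    intro h
    obtain ⟨i, hi, hi_eq⟩ := Finset.mem_image.mp h
    exact (enum1_strictMonoOn hM Set.self_mem_Ici (hs i hi).le (hs i hi)).ne' hi_eq
  rw [Finset.card_insert_of_notMem hnotMem, Finset.card_image_of_injOn]
  exact (enum1_strictMonoOn hM).injOn.mono fun i hi => (hs i hi).le

end enum1

theorem stmt6 (M : Set ℕ) (hM : M.Infinite) (l : ℕ) (F : Finset ℕ)
    (hl : l = enum1 M 1)
    (hF : F = insert (enum1 M 1)
      ((Finset.Ioc (2 ^ l) (2 ^ l + l)).image (enum1 M))) :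
    F.card = l + 1 ∧ (∃ n ∈ F, n < F.card) ∧ F ∉ Schreier1 ∧
      F ∈ push {A : Finset ℕ | ∃ k : ℕ, 1 ≤ k ∧
        (A ⊆ Finset.Ioc (2 ^ k) (2 ^ k + k) ∨
          ∃ E ⊆ Finset.Ioc (2 ^ k) (2 ^ k + k), A = insert 1 E)} M ∧
      ¬ push {A : Finset ℕ | ∃ k : ℕ, 1 ≤ k ∧
        (A ⊆ Finset.Ioc (2 ^ k) (2 ^ k + k) ∨
          ∃ E ⊆ Finset.Ioc (2 ^ k) (2 ^ k + k), A = insert 1 E)} M ⊆ Schreier1 := by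
  replace hF : F = insert (enum1 M 1) ((block l).image (enum1 M)) := hF
  have hcard : F.card = l + 1 := by
    rw [hF, card_insert_enum1_one_image hM fun i => one_lt_of_mem_block, block, Nat.card_Ioc]
    omega
  have hlF : l ∈ F := hF ▸ hl ▸ Finset.mem_insert_self _ _
  have hnotS : F ∉ Schreier1 := fun h => by have := h l hlF; omega
  have hpush : F ∈ push blockFamily M :=
    ⟨_, insert_one_block_mem_blockFamily l, by rw [hF, Finset.image_insert]⟩
  exact ⟨hcard, ⟨l, hlF, by omega⟩, hnotS, hpush, fun h => hnotS (h hpush)⟩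
end

section
/- Let F be an adequate family of finite subsets of ℕ and define F̄ = { {n} ∪ E : E ∈ F, n < min E } ∪ F. If A ∈ F[L]^{(β)} is nonempty, l ∈ L, and l < min A, then {l} ∪ A ∈ F̄[L]^{(β)}, for every ordinal β. Consequently, if F[L]^{(ω^α)} ≠ ∅ then s(F̄[L]) > ω^α + 1. -/
open Ordinal Set

/-!
Inserting a point `l < min A` commutes with each strong derivative step, since only the finitely
many `k ≤ l` cannot be inserted below `l`; applied to `A = ∅` this puts every `{l}` with `l ∈ L`
into `F̄[L]^{(ω^α)}`, hence `∅ ∈ F̄[L]^{(ω^α + 1)}`. For the index to be attained at all, some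
derivative of `F̄[L]` must vanish: a derivative equal to its successor and nonempty would contain
an increasing chain of sets of unbounded size, while chains in `F̄` have bounded size because
removing the points `≤ k` from a chain in `F̄` through `k` leaves a chain in `F`, and chains in the
pointwise closed family `F` are dominated by their pointwise limit.
-/

/-- The family `F̄` of the statement. -/
def insertBelow (𝓕 : Set (Finset ℕ)) : Set (Finset ℕ) :=
  {F | ∃ E ∈ 𝓕, ∃ n : ℕ, (∀ m ∈ E, n < m) ∧ F = insert n E} ∪ 𝓕

def ChainBounded (G : Set (Finset ℕ)) : Prop :=
  ∀ g : ℕ → Finset ℕ, Monotone g → (∀ n, g n ∈ G) → ∃ N, ∀ n, (g n).card ≤ N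

section sDeriv

universe u

variable {G : Set (Finset ℕ)} {L : Set ℕ}

lemma sDeriv_zero : sDeriv G L 0 = restrict G L := Ordinal.limitRecOn_zero _ _ _

lemma sDeriv_add_one (β : Ordinal) : sDeriv G L (β + 1) =
    {A ∈ sDeriv G L β | {l ∈ L | insert l A ∉ sDeriv G L β}.Finite} :=
  Ordinal.limitRecOn_add_one _ _ _ _

lemma sDeriv_limit {β : Ordinal} (h : Order.IsSuccLimit β) :
    sDeriv G L β = ⋂ b : Set.Iio β, sDeriv G L b :=
  Ordinal.limitRecOn_limit _ _ _ _ h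

lemma sDeriv_antitone : Antitone (sDeriv G L) := by
  intro γ β hγβ
  induction β using Ordinal.limitRecOn with
  | zero => rw [nonpos_iff_eq_zero.mp hγβ]
  | add_one β ih =>
    rcases Order.le_succ_iff_eq_or_le.mp (Order.succ_eq_add_one β ▸ hγβ) with rfl | hγβ
    · rw [Order.succ_eq_add_one]
    · rw [sDeriv_add_one]
      exact fun A hA => ih hγβ hA.1
  | limit β hβ _ =>
    rcases hγβ.eq_or_lt with rfl | hγβ
    · exact subset_rfl
    · rw [sDeriv_limit hβ]
      exact Set.iInter_subset _ (⟨γ, hγβ⟩ : Set.Iio β)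

lemma sDeriv_mono {G' : Set (Finset ℕ)} (hGG' : G ⊆ G') (β : Ordinal) :
    sDeriv G L β ⊆ sDeriv G' L β := by
  induction β using Ordinal.limitRecOn with
  | zero =>
    rw [sDeriv_zero, sDeriv_zero]
    exact fun A hA => ⟨hGG' hA.1, hA.2⟩
  | add_one β ih =>
    rw [sDeriv_add_one, sDeriv_add_one]
    exact fun A hA => ⟨ih hA.1, hA.2.subset fun l hl => ⟨hl.1, fun h => hl.2 (ih h)⟩⟩
  | limit β hβ ih =>
    rw [sDeriv_limit hβ, sDeriv_limit hβ]
    exact Set.iInter_mono fun b => ih b b.2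

lemma Hereditary.sDeriv (hG : Hereditary G) (β : Ordinal) : Hereditary (sDeriv G L β) := by
  induction β using Ordinal.limitRecOn with
  | zero =>
    rw [sDeriv_zero]
    exact fun A B hAB hB => ⟨hG hAB hB.1, (Finset.coe_subset.mpr hAB).trans hB.2⟩
  | add_one β ih =>
    rw [sDeriv_add_one]
    refine fun A B hAB hB => ⟨ih hAB hB.1, hB.2.subset fun l hl => ⟨hl.1, fun h => hl.2 ?_⟩⟩
    exact ih (Finset.insert_subset_insert l hAB) h
  | limit β hβ ih =>
    rw [sDeriv_limit hβ]
    exact fun A B hAB hB => Set.mem_iInter.mpr fun b => ih b b.2 hAB (Set.mem_iInter.mp hB b)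

lemma insert_mem_sDeriv {𝓕 : Set (Finset ℕ)}
    (hins : ∀ A ∈ 𝓕, ∀ l : ℕ, (∀ m ∈ A, l < m) → insert l A ∈ G) (β : Ordinal) :
    ∀ A ∈ sDeriv 𝓕 L β, ∀ l ∈ L, (∀ m ∈ A, l < m) → insert l A ∈ sDeriv G L β := by
  induction β using Ordinal.limitRecOn with
  | zero =>
    rw [sDeriv_zero, sDeriv_zero]
    intro A hA l hl hlA
    exact ⟨hins A hA.1 l hlA, by simpa [Set.insert_subset_iff] using ⟨hl, hA.2⟩⟩
  | add_one β ih =>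
    rw [sDeriv_add_one, sDeriv_add_one]
    intro A hA l hl hlA
    refine ⟨ih A hA.1 l hl hlA, (hA.2.union (Set.finite_Iic l)).subset ?_⟩
    rintro k ⟨hkL, hk⟩
    refine (le_or_gt k l).elim Or.inr fun hlk => Or.inl ⟨hkL, fun hkA => hk ?_⟩
    have hlkA : ∀ m ∈ insert k A, l < m := by
      simpa only [Finset.forall_mem_insert] using ⟨hlk, hlA⟩
    simpa only [Finset.insert_comm] using ih _ hkA l hl hlkA
  | limit β hβ ih =>
    rw [sDeriv_limit hβ, sDeriv_limit hβ]
    intro A hA l hl hlA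
    exact Set.mem_iInter.mpr fun b => ih b b.2 A (Set.mem_iInter.mp hA b) l hl hlA

lemma exists_monotone_of_forall_insert_mem {D : Set (Finset ℕ)}
    (hD : ∀ A ∈ D, ∃ l ∉ A, insert l A ∈ D) {A : Finset ℕ} (hA : A ∈ D) :
    ∃ g : ℕ → Finset ℕ, Monotone g ∧ (∀ n, g n ∈ D) ∧ ∀ n, n ≤ (g n).card := by
  choose! p hpA hpD using hD
  let g : ℕ → Finset ℕ := fun n => (fun B => insert (p B) B)^[n] A
  have hg_succ : ∀ n, g (n + 1) = insert (p (g n)) (g n) :=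
    fun n => Function.iterate_succ_apply' _ n A
  have hgD : ∀ n, g n ∈ D := by
    intro n
    induction n with
    | zero => exact hA
    | succ n ih => rw [hg_succ]; exact hpD _ ih
  refine ⟨g, monotone_nat_of_le_succ fun n => ?_, hgD, fun n => ?_⟩
  · rw [hg_succ]
    exact Finset.subset_insert _ _
  · induction n with
    | zero => exact Nat.zero_le _
    | succ n ih =>
      rw [hg_succ, Finset.card_insert_of_notMem (hpA _ (hgD n))]
      omega

lemma sDeriv_eq_empty_of_add_one_eq (hL : L.Infinite) (hG : ChainBounded G) {β : Ordinal}
    (hfix : sDeriv G L (β + 1) = sDeriv G L β) : sDeriv G L β = ∅ := by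
  refine Set.eq_empty_of_forall_notMem fun A hA => ?_
  have hstep : ∀ B ∈ sDeriv G L β, ∃ l ∉ B, insert l B ∈ sDeriv G L β := by
    intro B hB
    rw [← hfix, sDeriv_add_one] at hB
    obtain ⟨l, hlL, hl⟩ := (hL.sdiff (hB.2.union B.finite_toSet)).nonempty
    rw [Set.mem_union, not_or] at hl
    exact ⟨l, hl.2, by_contra fun h => hl.1 ⟨hlL, h⟩⟩
  obtain ⟨g, hg, hgD, hgcard⟩ := exists_monotone_of_forall_insert_mem hstep hA
  have hgG : ∀ n, g n ∈ G := fun n =>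
    (sDeriv_zero (G := G) (L := L) ▸ sDeriv_antitone (bot_le (a := β)) (hgD n)).1
  obtain ⟨N, hN⟩ := hG g hg hgG
  exact absurd (hgcard (N + 1)) (by have := hN (N + 1); omega)

lemma exists_sDeriv_eq_empty (hL : L.Infinite) (hG : ChainBounded G) :
    ∃ γ : Ordinal.{u}, sDeriv G L γ = ∅ := by
  by_contra! hne
  refine not_injective_of_ordinal (sDeriv G L : Ordinal.{u} → _)
    (StrictAnti.injective fun γ β hγβ => ?_)
  refine (sDeriv_antitone hγβ.le).lt_of_ne fun heq => (hne γ).ne_empty ?_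
  refine sDeriv_eq_empty_of_add_one_eq hL hG (le_antisymm (sDeriv_antitone le_self_add) ?_)
  exact heq ▸ sDeriv_antitone (Order.add_one_le_of_lt hγβ)

lemma lt_sIndex {β : Ordinal.{u}} (hG : ∃ γ : Ordinal.{u}, sDeriv G L γ = ∅)
    (hβ : (sDeriv G L β).Nonempty) : β < sIndex G L := by
  have hindex : sDeriv G L (sIndex G L) = ∅ := csInf_mem hG
  by_contra! hle
  exact hβ.ne_empty (Set.subset_eq_empty (sDeriv_antitone hle) hindex)

end sDeriv

lemma PtwiseClosed.chainBounded {𝓕 : Set (Finset ℕ)} (h𝓕 : PtwiseClosed 𝓕) :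
    ChainBounded 𝓕 := by
  classical
  intro g hg hg𝓕
  let x : ℕ → Bool := fun m => decide (∃ k, m ∈ g k)
  have hlim : Filter.Tendsto (fun n => chi (g n)) Filter.atTop (nhds x) := by
    refine tendsto_pi_nhds.mpr fun m => tendsto_nhds_of_eventually_eq ?_
    suffices ∀ᶠ n in Filter.atTop, (m ∈ g n ↔ ∃ k, m ∈ g k) from
      this.mono fun n hn => show decide _ = decide _ from decide_eq_decide.mpr hn
    by_cases hm : ∃ k, m ∈ g k
    · obtain ⟨k, hk⟩ := hm
      filter_upwards [Filter.eventually_ge_atTop k] with n hn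
      exact ⟨fun h => ⟨n, h⟩, fun _ => hg hn hk⟩
    · exact Filter.Eventually.of_forall fun n => iff_of_false (fun h => hm ⟨n, h⟩) hm
  obtain ⟨B, -, hB⟩ := h𝓕.mem_of_tendsto hlim
    (Filter.Eventually.of_forall fun n => ⟨g n, hg𝓕 n, rfl⟩)
  refine ⟨B.card, fun n => Finset.card_le_card fun m hm => ?_⟩
  have hxm : x m = true := show decide _ = true from decide_eq_true ⟨n, hm⟩
  simpa [← hB, chi] using hxm

lemma filter_lt_mem_of_mem_insertBelow {𝓕 : Set (Finset ℕ)} (h𝓕 : Hereditary 𝓕)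
    {B : Finset ℕ} (hB : B ∈ insertBelow 𝓕) {k : ℕ} (hk : k ∈ B) :
    B.filter (k < ·) ∈ 𝓕 := by
  rcases hB with ⟨E, hE, n, hnE, rfl⟩ | hB
  · refine h𝓕 (fun m hm => ?_) hE
    rw [Finset.mem_filter, Finset.mem_insert] at hm
    rcases hm with ⟨rfl | hmE, hkm⟩
    · rcases Finset.mem_insert.mp hk with rfl | hkE
      · exact absurd hkm (lt_irrefl k)
      · exact absurd (hnE k hkE) hkm.not_gt
    · exact hmE
  · exact h𝓕 (Finset.filter_subset _ _) hB

lemma ChainBounded.insertBelow {𝓕 : Set (Finset ℕ)} (h𝓕 : Hereditary 𝓕)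
    (hbdd : ChainBounded 𝓕) : ChainBounded (insertBelow 𝓕) := by
  intro g hg hgF
  by_cases hempty : ∀ n, g n = ∅
  · exact ⟨0, fun n => by simp [hempty n]⟩
  obtain ⟨N, k, hk⟩ : ∃ N, (g N).Nonempty := by
    simpa only [not_forall, ← Finset.nonempty_iff_ne_empty] using hempty
  obtain ⟨C, hC⟩ := hbdd (fun n => (g (n + N)).filter (k < ·))
    (fun a b hab => Finset.filter_subset_filter _ (hg (Nat.add_le_add_right hab N)))
    (fun n => filter_lt_mem_of_mem_insertBelow h𝓕 (hgF _) (hg (Nat.le_add_left N n) hk))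
  refine ⟨C + (k + 1), fun n => ?_⟩
  have hsmall : ((g (n + N)).filter fun m => ¬k < m).card ≤ k + 1 :=
    (Finset.card_le_card fun m hm => Finset.mem_range.mpr (by
      simp only [Finset.mem_filter, not_lt] at hm; omega)).trans (Finset.card_range _).le
  calc (g n).card ≤ (g (n + N)).card := Finset.card_le_card (hg (Nat.le_add_right n N))
    _ = ((g (n + N)).filter (k < ·)).card + ((g (n + N)).filter fun m => ¬k < m).card :=
      (Finset.card_filter_add_card_filter_not _).symm
    _ ≤ C + (k + 1) := add_le_add (hC n) hsmall

theorem stmt15 (𝓕 : Set (Finset ℕ)) (h𝓕 : Adequate 𝓕)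
    (L : Set ℕ) (hL : L.Infinite) (α : Ordinal) :
    (∀ β : Ordinal, ∀ A ∈ sDeriv 𝓕 L β, A.Nonempty → ∀ l ∈ L, (∀ m ∈ A, l < m) →
      insert l A ∈
        sDeriv ({F | ∃ E ∈ 𝓕, ∃ n : ℕ, (∀ m ∈ E, n < m) ∧ F = insert n E} ∪ 𝓕) L β) ∧
    (sDeriv 𝓕 L (Ordinal.omega0 ^ α) ≠ ∅ →
      Ordinal.omega0 ^ α + 1 <
        sIndex ({F | ∃ E ∈ 𝓕, ∃ n : ℕ, (∀ m ∈ E, n < m) ∧ F = insert n E} ∪ 𝓕) L) := by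
  obtain ⟨hher, hcl⟩ := h𝓕
  have hins : ∀ A ∈ 𝓕, ∀ l : ℕ, (∀ m ∈ A, l < m) → insert l A ∈ insertBelow 𝓕 :=
    fun A hA l hlA => Or.inl ⟨A, hA, l, hlA, rfl⟩
  refine ⟨fun β A hA _ => insert_mem_sDeriv hins β A hA, fun hne => ?_⟩
  obtain ⟨A, hA⟩ := Set.nonempty_iff_ne_empty.mpr hne
  have hempty : ∅ ∈ sDeriv 𝓕 L (ω ^ α) := hher.sDeriv _ (Finset.empty_subset A) hA
  have hsingle : ∀ l ∈ L, insert l ∅ ∈ sDeriv (insertBelow 𝓕) L (ω ^ α) :=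
    fun l hl => insert_mem_sDeriv hins _ ∅ hempty l hl (by simp)
  refine lt_sIndex (exists_sDeriv_eq_empty hL (hcl.chainBounded.insertBelow hher)) ⟨∅, ?_⟩
  rw [sDeriv_add_one]
  refine ⟨sDeriv_mono Set.subset_union_right _ hempty, Set.finite_empty.subset ?_⟩
  rintro l ⟨hl, hl'⟩
  exact hl' (hsingle l hl)
end
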